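/- arXiv:2005.02607 — 2 statements merged into one kernel-verified Lean document; each statement's English description precedes it below -/
import Mathlib

section
/- (Hodge theorem for clique complexes.) Let G be a simple graph on vertex set Fin n and let 1 ≤ k ≤ n − 2. Define the k-th combinatorial Laplacian Δ_k^G := (∂_k^G)† ∂_k^G + ∂_{k+1}^G (∂_{k+1}^G)†. Then the dimension of the kernel of Δ_k^G equals the k-th Betti number β_k^G, i.e., the dimension of the quotient space ker ∂_k^G / im ∂_{k+1}^G. -/
open Finset

variable {n : ℕ}

/-- The complex Euclidean space spanned by the `k`-cliques of `G`
(so `CliqueSpace G (k+1)` is the space `C_k(G)` spanned by `(k+1)`-cliques). -/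
abbrev CliqueSpace (G : SimpleGraph (Fin n)) [DecidableRel G.Adj] (k : ℕ) : Type :=
  EuclideanSpace ℂ {s : Finset (Fin n) // G.IsNClique k s}

/-- Erasing a vertex from a `(k+1)`-clique yields a `k`-clique. -/
lemma erase_isNClique {G : SimpleGraph (Fin n)} {k : ℕ} {s : Finset (Fin n)}
    (hs : G.IsNClique (k + 1) s) {v : Fin n} (hv : v ∈ s) :
    G.IsNClique k (s.erase v) := by
  refine ⟨hs.1.subset ?_, ?_⟩
  · exact_mod_cast Finset.erase_subset v s
  · rw [Finset.card_erase_of_mem hv, hs.2]; omega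

/-- The boundary map `∂_k^G : C_k(G) → C_{k-1}(G)` of the clique complex, sending
(the basis vector of) a `(k+1)`-clique `s` with elements `v_0 < v_1 < ⋯ < v_k` to
`∑ i, (-1)^i • e_{s \ {v_i}}`; the sign exponent for removing `v` is the number of
elements of `s` smaller than `v`. -/
noncomputable def bdry (G : SimpleGraph (Fin n)) [DecidableRel G.Adj] (k : ℕ) :
    CliqueSpace G (k + 1) →ₗ[ℂ] CliqueSpace G k :=
  (PiLp.basisFun 2 ℂ {s : Finset (Fin n) // G.IsNClique (k + 1) s}).constr ℂ fun s =>
    ∑ v ∈ s.val.attach,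
      ((-1 : ℂ) ^ (s.val.filter (fun w => w < v.val)).card) •
        EuclideanSpace.single ⟨s.val.erase v.val, erase_isNClique s.prop v.prop⟩ 1


lemma sign_aux {s : Finset (Fin n)} {v w : Fin n} (hv : v ∈ s) (hw : w ∈ s) (hlt : w < v) :
    (s.filter (fun u => u < v)).card + ((s.erase v).filter (fun u => u < w)).card
      = (s.filter (fun u => u < w)).card + ((s.erase w).filter (fun u => u < v)).card + 1 := by
  have h1 : (s.erase v).filter (fun u => u < w) = s.filter (fun u => u < w) := by
    rw [Finset.filter_erase, Finset.erase_eq_of_notMem]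
    simp only [Finset.mem_filter, not_and]
    intro _ h; exact absurd h (not_lt.2 hlt.le)
  have h2 : (s.erase w).filter (fun u => u < v) = (s.filter (fun u => u < v)).erase w := by
    rw [Finset.filter_erase]
  have hwmem : w ∈ s.filter (fun u => u < v) := Finset.mem_filter.2 ⟨hw, hlt⟩
  have hpos : 1 ≤ (s.filter (fun u => u < v)).card := Finset.card_pos.2 ⟨w, hwmem⟩
  rw [h1, h2, Finset.card_erase_of_mem hwmem]
  omega

lemma sign_cancel {s : Finset (Fin n)} {v w : Fin n} (hv : v ∈ s) (hw : w ∈ s) (hne : v ≠ w) :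
    ((-1 : ℂ) ^ (s.filter (fun u => u < v)).card)
        * (-1) ^ (((s.erase v)).filter (fun u => u < w)).card
      + ((-1 : ℂ) ^ (s.filter (fun u => u < w)).card)
        * (-1) ^ (((s.erase w)).filter (fun u => u < v)).card = 0 := by
  rcases hne.lt_or_gt with h | h
  · have := sign_aux hw hv h
    rw [← pow_add, ← pow_add, this, pow_succ]
    ring
  · have := sign_aux hv hw h
    rw [← pow_add, ← pow_add, this, pow_succ]
    ring


lemma erase_erase_comm (s : Finset (Fin n)) (a b : Fin n) :
    (s.erase a).erase b = (s.erase b).erase a := by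
  ext x; simp only [Finset.mem_erase]; tauto


lemma key_cancel (s t : Finset (Fin n)) :
    ∑ v ∈ s, ∑ w ∈ s.erase v,
      ((-1 : ℂ) ^ (s.filter (fun u => u < v)).card)
        * (((-1 : ℂ) ^ ((s.erase v).filter (fun u => u < w)).card)
          * (if t = (s.erase v).erase w then 1 else 0)) = 0 := by
  have hstep : ∀ v ∈ s,
      ∑ w ∈ s.erase v,
        ((-1 : ℂ) ^ (s.filter (fun u => u < v)).card)
          * (((-1 : ℂ) ^ ((s.erase v).filter (fun u => u < w)).card)
            * (if t = (s.erase v).erase w then 1 else 0))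
      = ∑ w ∈ s, (if w = v then 0 else
          ((-1 : ℂ) ^ (s.filter (fun u => u < v)).card)
            * (((-1 : ℂ) ^ ((s.erase v).filter (fun u => u < w)).card)
              * (if t = (s.erase v).erase w then 1 else 0))) := by
    intro v hv
    rw [← Finset.filter_ne' s v, Finset.sum_filter]
    refine Finset.sum_congr rfl fun w hw => ?_
    by_cases h : w = v <;> simp [h]
  rw [Finset.sum_congr rfl hstep, ← Finset.sum_product']
  apply Finset.sum_involution (fun p _ => (p.2, p.1))
  · rintro ⟨v, w⟩ hp
    simp only [Finset.mem_product] at hp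
    by_cases h : w = v
    · simp [h]
    · have h' : ¬ v = w := fun hh => h hh.symm
      simp only [h, h', if_false]
      rw [erase_erase_comm s w v]
      by_cases ht : t = (s.erase v).erase w
      · simp only [ht, if_pos, mul_one]
        linear_combination sign_cancel hp.1 hp.2 h'
      · simp [ht]
  · rintro ⟨v, w⟩ _ hf heq
    simp only [Prod.mk.injEq] at heq
    exact hf (by simp [heq.1])
  · rintro ⟨v, w⟩ hp
    simp only [Finset.mem_product] at hp ⊢
    exact ⟨hp.2, hp.1⟩
  · rintro ⟨v, w⟩ _; rfl


lemma bdry_single (G : SimpleGraph (Fin n)) [DecidableRel G.Adj] (k : ℕ)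
    (s : {s : Finset (Fin n) // G.IsNClique (k + 1) s}) :
    bdry G k (EuclideanSpace.single s 1) =
      ∑ v ∈ s.val.attach,
        ((-1 : ℂ) ^ (s.val.filter (fun w => w < v.val)).card) •
          EuclideanSpace.single ⟨s.val.erase v.val, erase_isNClique s.prop v.prop⟩ 1 := by
  have h : EuclideanSpace.single s (1 : ℂ)
      = PiLp.basisFun 2 ℂ {s : Finset (Fin n) // G.IsNClique (k + 1) s} s := by
    rw [PiLp.basisFun_apply]
  rw [h, bdry, Module.Basis.constr_basis]

lemma bdry_comp (G : SimpleGraph (Fin n)) [DecidableRel G.Adj] (k : ℕ) :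
    (bdry G k) ∘ₗ (bdry G (k + 1)) = 0 := by
  apply (PiLp.basisFun 2 ℂ _).ext
  intro s
  have h : PiLp.basisFun 2 ℂ {s : Finset (Fin n) // G.IsNClique (k + 2) s} s
      = EuclideanSpace.single s (1 : ℂ) := by
    rw [PiLp.basisFun_apply]
  rw [LinearMap.comp_apply, h, bdry_single, map_sum, LinearMap.zero_apply]
  simp_rw [map_smul, bdry_single]
  ext t
  rw [WithLp.ofLp_sum, Finset.sum_apply t]
  simp only [PiLp.smul_apply, WithLp.ofLp_smul, WithLp.ofLp_sum, Pi.smul_apply, Finset.sum_apply t, EuclideanSpace.single_apply,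
    smul_eq_mul, Subtype.ext_iff]
  have h0 : WithLp.ofLp (0 : CliqueSpace G k) t = 0 := rfl
  rw [h0]
  simp only [Finset.mul_sum]
  refine Eq.trans ?_ (key_cancel (n := n) s.val t.val)
  rw [Finset.sum_attach (↑s : Finset (Fin n)) (fun v =>
    ∑ i ∈ ((↑s : Finset (Fin n)).erase v).attach,
      ((-1:ℂ) ^ (Finset.filter (fun w => w < v) (↑s : Finset (Fin n))).card *
        ((-1:ℂ) ^ (Finset.filter (fun w => w < ↑i) ((↑s : Finset (Fin n)).erase v)).card *
          (if (↑t : Finset (Fin n)) = ((↑s : Finset (Fin n)).erase v).erase ↑i then 1 else 0))))]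
  refine Finset.sum_congr rfl fun v _ => ?_
  exact Finset.sum_attach ((↑s : Finset (Fin n)).erase v) (fun w =>
      ((-1:ℂ) ^ (Finset.filter (fun u => u < v) (↑s : Finset (Fin n))).card *
        ((-1:ℂ) ^ (Finset.filter (fun u => u < w) ((↑s : Finset (Fin n)).erase v)).card *
          (if (↑t : Finset (Fin n)) = ((↑s : Finset (Fin n)).erase v).erase w then 1 else 0))))

/-- Hodge theorem for clique complexes: the dimension of the kernel of the `k`-th
combinatorial Laplacian `Δ_k^G = (∂_k^G)† ∂_k^G + ∂_{k+1}^G (∂_{k+1}^G)†` equals the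
`k`-th Betti number, i.e. the dimension of `ker ∂_k^G / im ∂_{k+1}^G`. -/
theorem hodge_theorem_clique_complex
    (G : SimpleGraph (Fin n)) [DecidableRel G.Adj] (k : ℕ)
    (hk₁ : 1 ≤ k) (hk₂ : k ≤ n - 2) :
    Module.finrank ℂ
        (LinearMap.ker
          (LinearMap.adjoint (bdry G k) ∘ₗ bdry G k
            + bdry G (k + 1) ∘ₗ LinearMap.adjoint (bdry G (k + 1))))
      = Module.finrank ℂ
          (LinearMap.ker (bdry G k) ⧸
            (LinearMap.range (bdry G (k + 1))).comap (LinearMap.ker (bdry G k)).subtype) := by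
  set A := bdry G k
  set B := bdry G (k + 1)
  have hAB : A ∘ₗ B = 0 := bdry_comp G k
  have hle : LinearMap.range B ≤ LinearMap.ker A := LinearMap.range_le_ker_iff.2 hAB
  -- kernel of Laplacian = ker A ⊓ ker B†
  have hker : LinearMap.ker (LinearMap.adjoint A ∘ₗ A + B ∘ₗ LinearMap.adjoint B)
      = LinearMap.ker A ⊓ LinearMap.ker (LinearMap.adjoint B) := by
    ext x
    simp only [LinearMap.mem_ker, Submodule.mem_inf, LinearMap.add_apply, LinearMap.comp_apply]
    constructor
    · intro hx
      have h1 : (inner ℂ x (LinearMap.adjoint A (A x) + B (LinearMap.adjoint B x)) : ℂ) = 0 := by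
        rw [hx, inner_zero_right]
      rw [inner_add_right, LinearMap.adjoint_inner_right] at h1
      have h2 : (inner ℂ x (B (LinearMap.adjoint B x)) : ℂ)
          = inner ℂ (LinearMap.adjoint B x) (LinearMap.adjoint B x) := by
        rw [← LinearMap.adjoint_adjoint B, LinearMap.adjoint_inner_right,
          LinearMap.adjoint_adjoint]
      rw [h2, inner_self_eq_norm_sq_to_K, inner_self_eq_norm_sq_to_K] at h1
      have h3 : (‖A x‖ ^ 2 + ‖LinearMap.adjoint B x‖ ^ 2 : ℝ) = 0 := by
        have h3' : ((‖A x‖ ^ 2 + ‖LinearMap.adjoint B x‖ ^ 2 : ℝ) : ℂ) = 0 := by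
          push_cast
          exact h1
        exact_mod_cast h3'
      obtain ⟨h4, h5⟩ := (add_eq_zero_iff_of_nonneg (sq_nonneg _) (sq_nonneg _)).1 h3
      constructor
      · exact norm_eq_zero.1 ((pow_eq_zero_iff (two_ne_zero)).1 h4)
      · exact norm_eq_zero.1 ((pow_eq_zero_iff (two_ne_zero)).1 h5)
    · rintro ⟨h1, h2⟩
      rw [h1, h2, map_zero, map_zero, add_zero]
  -- ker B† = (range B)ᗮ
  have horth : LinearMap.ker (LinearMap.adjoint B) = (LinearMap.range B)ᗮ := by
    ext x
    simp only [LinearMap.mem_ker, Submodule.mem_orthogonal]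
    constructor
    · intro hx u hu
      obtain ⟨y, rfl⟩ := hu
      rw [← LinearMap.adjoint_inner_right, hx, inner_zero_right]
    · intro hx
      have h1 : (inner ℂ (LinearMap.adjoint B x) (LinearMap.adjoint B x) : ℂ) = 0 := by
        rw [LinearMap.adjoint_inner_left]
        exact ((inner_eq_zero_symm).1 (hx _ ⟨_, rfl⟩))
      exact inner_self_eq_zero.1 h1
  have hdim := Submodule.finrank_add_inf_finrank_orthogonal (𝕜 := ℂ) hle
  have hquot := Submodule.finrank_quotient_add_finrank
    ((LinearMap.range B).comap (LinearMap.ker A).subtype)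
  have hcomap : Module.finrank ℂ ((LinearMap.range B).comap (LinearMap.ker A).subtype)
      = Module.finrank ℂ (LinearMap.range B) :=
    (Submodule.comapSubtypeEquivOfLe hle).finrank_eq
  rw [hker, horth, inf_comm]
  rw [hcomap] at hquot
  omega
end

section
/- (Subtrace estimation from approximate threshold counts.) Let N ≥ 1 and T ≥ 1 be integers, let ε ≥ 0, and let x : Fin N → ℝ satisfy 0 ≤ x_i ≤ 1 for all i. For j = 0, 1, …, T let c_j := |{ i : x_i ≤ j/T }|, and let χ_0, χ_1, …, χ_T be real numbers with |χ_j − c_j| ≤ ε·N for every j. Then the histogram-mean estimate S := Σ_{j=1}^{T} (j/T)·(χ_j − χ_{j−1}) satisfies | S − Σ_i x_i | ≤ N/T + 2·ε·N. -/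
lemma abel_lin (g : ℕ → ℝ) (T : ℕ) :
    ∑ j ∈ Finset.Icc 1 T, (j : ℝ) * (g j - g (j - 1))
      = T * g T - ∑ j ∈ Finset.range T, g j := by
  induction T with
  | zero => simp
  | succ n ih =>
      rw [Finset.sum_Icc_succ_top (Nat.le_add_left 1 n), ih, Finset.sum_range_succ]
      push_cast
      ring_nf
lemma per_point (T : ℕ) (hT : 1 ≤ T) (e : ℝ) (he0 : 0 ≤ e) (he1 : e ≤ 1) :
    e ≤ 1 - (((Finset.range T).filter (fun j : ℕ => e ≤ (j : ℝ) / T)).card : ℝ) / T ∧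
    1 - (((Finset.range T).filter (fun j : ℕ => e ≤ (j : ℝ) / T)).card : ℝ) / T ≤ e + 1 / T := by
  have hT0 : (0:ℝ) < T := by exact_mod_cast hT
  set k := ⌈e * T⌉₊ with hk
  have hkT : k ≤ T := by
    apply Nat.ceil_le.mpr
    calc e * T ≤ 1 * T := by nlinarith
    _ = (T:ℝ) := one_mul _
  have hfil : (Finset.range T).filter (fun j : ℕ => e ≤ (j : ℝ) / T) = Finset.Ico k T := by
    ext j
    simp only [Finset.mem_filter, Finset.mem_range, Finset.mem_Ico]
    constructor
    · rintro ⟨h1, h2⟩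
      refine ⟨Nat.ceil_le.mpr ?_, h1⟩
      rw [le_div_iff₀ hT0] at h2; linarith
    · rintro ⟨h1, h2⟩
      refine ⟨h2, ?_⟩
      rw [le_div_iff₀ hT0]
      calc e * T ≤ (k:ℝ) := Nat.le_ceil _
      _ ≤ j := by exact_mod_cast h1
  rw [hfil, Nat.card_Ico]
  have hcast : ((T - k : ℕ) : ℝ) = (T : ℝ) - k := by
    push_cast [hkT]; ring
  rw [hcast]
  have h1 : e * T ≤ k := Nat.le_ceil _
  have h2 : (k : ℝ) < e * T + 1 := Nat.ceil_lt_add_one (by positivity)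
  have hd : ((T:ℝ) - k) / T = 1 - (k:ℝ)/T := by field_simp
  have hA : e ≤ (k:ℝ)/T := (le_div_iff₀ hT0).mpr h1
  have hB : (k:ℝ)/T ≤ e + 1/T := by
    rw [div_le_iff₀ hT0]
    have h3 : (1/(T:ℝ))*T = 1 := by field_simp
    nlinarith
  constructor <;> [skip; skip] <;> rw [hd] at * <;> linarith

/-- Subtrace estimation from approximate threshold counts: if `χ_j` approximates
the threshold count `c_j = |{i : x_i ≤ j/T}|` up to additive error `ε·N` for each
`j = 0, …, T`, then the histogram-mean estimate `S = ∑_{j=1}^T (j/T)(χ_j - χ_{j-1})`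
approximates `∑ i, x_i` up to additive error `N/T + 2·ε·N`. -/
theorem subtrace_estimation_from_approximate_counts
    (N T : ℕ) (hN : 1 ≤ N) (hT : 1 ≤ T) (ε : ℝ) (hε : 0 ≤ ε)
    (x : Fin N → ℝ) (hx : ∀ i, 0 ≤ x i ∧ x i ≤ 1)
    (c : ℕ → ℕ)
    (hc : ∀ j, c j = (Finset.univ.filter (fun i => x i ≤ (j : ℝ) / T)).card)
    (χ : ℕ → ℝ)
    (hχ : ∀ j ≤ T, |χ j - (c j : ℝ)| ≤ ε * N) :
    |(∑ j ∈ Finset.Icc 1 T, ((j : ℝ) / T) * (χ j - χ (j - 1)))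
        - ∑ i, x i|
      ≤ (N : ℝ) / T + 2 * ε * N := by
  have hT0 : (0:ℝ) < T := by exact_mod_cast hT
  -- rewrite the estimator via Abel summation
  have hS : ∑ j ∈ Finset.Icc 1 T, ((j : ℝ) / T) * (χ j - χ (j - 1))
      = χ T - (∑ j ∈ Finset.range T, χ j) / T := by
    calc ∑ j ∈ Finset.Icc 1 T, ((j:ℝ)/T) * (χ j - χ (j-1))
        = (∑ j ∈ Finset.Icc 1 T, (j:ℝ) * (χ j - χ (j-1))) / T := by
          rw [Finset.sum_div]; exact Finset.sum_congr rfl fun j _ => by ring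
      _ = ((T:ℝ) * χ T - ∑ j ∈ Finset.range T, χ j) / T := by rw [abel_lin]
      _ = χ T - (∑ j ∈ Finset.range T, χ j)/T := by
          field_simp
  -- c T = N
  have hcT : (c T : ℝ) = N := by
    rw [hc T]
    have : (Finset.univ.filter (fun i : Fin N => x i ≤ (T:ℝ)/T)) = Finset.univ := by
      apply Finset.filter_true_of_mem
      intro i _
      rw [div_self (ne_of_gt hT0)]
      exact (hx i).2
    rw [this, Finset.card_univ, Fintype.card_fin]
  set m : Fin N → ℕ := fun i => ((Finset.range T).filter (fun j : ℕ => x i ≤ (j:ℝ)/T)).card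
    with hm
  -- double counting
  have hsum : (∑ j ∈ Finset.range T, (c j : ℝ)) = ∑ i, (m i : ℝ) := by
    have h1 : ∀ j, ((c j : ℕ) : ℝ) = ∑ i : Fin N, if x i ≤ (j:ℝ)/T then (1:ℝ) else 0 := by
      intro j
      rw [hc j, Finset.card_filter]
      push_cast
      exact Finset.sum_congr rfl fun i _ => by split <;> simp
    have h2 : ∀ i : Fin N, ((m i : ℕ) : ℝ) = ∑ j ∈ Finset.range T, if x i ≤ (j:ℝ)/T then (1:ℝ) else 0 := by
      intro i
      simp only [hm]
      rw [Finset.card_filter]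
      push_cast
      exact Finset.sum_congr rfl fun j _ => by split <;> simp
    simp only [h1, h2]
    exact Finset.sum_comm
  -- the geometric error term
  have hkey : ∀ i : Fin N, x i ≤ 1 - (m i : ℝ)/T ∧ 1 - (m i : ℝ)/T ≤ x i + 1/T :=
    fun i => per_point T hT (x i) (hx i).1 (hx i).2
  have hGub : (N:ℝ) - (∑ i, (m i : ℝ))/T - ∑ i, x i ≤ (N:ℝ)/T := by
    have : (N:ℝ) - (∑ i, (m i : ℝ))/T = ∑ i : Fin N, (1 - (m i : ℝ)/T) := by
      rw [Finset.sum_sub_distrib, ← Finset.sum_div]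
      simp
    rw [this, ← Finset.sum_sub_distrib]
    calc (∑ i : Fin N, (1 - (m i : ℝ)/T - x i)) ≤ ∑ i : Fin N, (1/T : ℝ) :=
          Finset.sum_le_sum fun i _ => by have := (hkey i).2; linarith
      _ = (N:ℝ)/T := by simp; ring
  have hGlb : 0 ≤ (N:ℝ) - (∑ i, (m i : ℝ))/T - ∑ i, x i := by
    have : (N:ℝ) - (∑ i, (m i : ℝ))/T = ∑ i : Fin N, (1 - (m i : ℝ)/T) := by
      rw [Finset.sum_sub_distrib, ← Finset.sum_div]
      simp
    rw [this, ← Finset.sum_sub_distrib]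
    exact Finset.sum_nonneg fun i _ => by have := (hkey i).1; linarith
  -- the χ errors
  have hA : |χ T - (c T : ℝ)| ≤ ε * N := hχ T le_rfl
  have hB : |∑ j ∈ Finset.range T, (χ j - (c j : ℝ))| ≤ T * (ε * N) := by
    calc |∑ j ∈ Finset.range T, (χ j - (c j : ℝ))|
        ≤ ∑ j ∈ Finset.range T, |χ j - (c j : ℝ)| := Finset.abs_sum_le_sum_abs _ _
      _ ≤ ∑ j ∈ Finset.range T, ε * N :=
          Finset.sum_le_sum fun j hj => hχ j (le_of_lt (Finset.mem_range.mp hj))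
      _ = T * (ε * N) := by simp [mul_comm]
  -- assemble
  rw [hS]
  have hdecomp : χ T - (∑ j ∈ Finset.range T, χ j)/T - ∑ i, x i
      = (χ T - (c T : ℝ)) - (∑ j ∈ Finset.range T, (χ j - (c j : ℝ)))/T
        + ((N:ℝ) - (∑ i, (m i : ℝ))/T - ∑ i, x i) := by
    rw [Finset.sum_sub_distrib, ← hsum, ← hcT]
    field_simp
    ring
  rw [hdecomp]
  have hBdiv : |(∑ j ∈ Finset.range T, (χ j - (c j : ℝ)))/T| ≤ ε * N := by
    rw [abs_div, abs_of_pos hT0, div_le_iff₀ hT0]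
    calc |∑ j ∈ Finset.range T, (χ j - (c j : ℝ))| ≤ T * (ε * N) := hB
      _ = ε * N * T := by ring
  calc |(χ T - (c T : ℝ)) - (∑ j ∈ Finset.range T, (χ j - (c j : ℝ)))/T
        + ((N:ℝ) - (∑ i, (m i : ℝ))/T - ∑ i, x i)|
      ≤ |(χ T - (c T : ℝ)) - (∑ j ∈ Finset.range T, (χ j - (c j : ℝ)))/T|
        + |(N:ℝ) - (∑ i, (m i : ℝ))/T - ∑ i, x i| := abs_add_le _ _
    _ ≤ (|χ T - (c T : ℝ)| + |(∑ j ∈ Finset.range T, (χ j - (c j : ℝ)))/T|)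
        + |(N:ℝ) - (∑ i, (m i : ℝ))/T - ∑ i, x i| := by
          gcongr; exact abs_sub _ _
    _ ≤ (ε * N + ε * N) + (N:ℝ)/T := by
          have : |(N:ℝ) - (∑ i, (m i : ℝ))/T - ∑ i, x i| ≤ (N:ℝ)/T := by
            rw [abs_of_nonneg hGlb]; exact hGub
          gcongr
    _ = (N:ℝ)/T + 2 * ε * N := by ring
end
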